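/- Let p₁, …, p_D be pairwise distinct points of the grid (π/2)·{−1,0,1}^m. Then the Gram matrix (K(p_i, p_j))_{1≤i,j≤D} ∈ ℝ^{D×D} is invertible; in particular, for any right-hand side (y₁,…,y_D)ᵀ ∈ ℝ^D, the linear system (K(p_i, p_j))_{1≤i,j≤D} · η = (y₁,…,y_D)ᵀ has a unique solution η ∈ ℝ^D. -/

import Mathlib

open scoped Real BigOperators
open MeasureTheory Filter

noncomputable section

/-- The frequency grid `{-1,0,1}^m`. -/
def Omega (m : ℕ) : Finset (Fin m → ℤ) :=
  Fintype.piFinset fun _ => ({-1, 0, 1} : Finset ℤ)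

/-- `ω ⬝ x = Σ_j ω_j x_j`. -/
def dotZ {m : ℕ} (ω : Fin m → ℤ) (x : Fin m → ℝ) : ℝ := ∑ j, (ω j : ℝ) * x j

/-- The kernel `K(x,z) = (2π)^{-m} Σ_{ω∈{-1,0,1}^m} e^{i ω·(x-z)}` (a real number). -/
def Kker (m : ℕ) (x z : Fin m → ℝ) : ℝ :=
  ((2 * Real.pi) ^ m)⁻¹ *
    (∑ ω ∈ Omega m, Complex.exp (Complex.I * (dotZ ω (x - z) : ℝ))).re

/-- `K_x = K(x, ·)`. -/
def Kfun (m : ℕ) (x : Fin m → ℝ) : (Fin m → ℝ) → ℝ := fun z => Kker m x z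

/-- The space `H` of real functions of the form `Σ_{ω∈{-1,0,1}^m} c_ω e^{i ω·z}`
with `c_{-ω} = conj (c_ω)`. -/
def Hset (m : ℕ) : Set ((Fin m → ℝ) → ℝ) :=
  { g | ∃ c : (Fin m → ℤ) → ℂ,
      (∀ ω, c (-ω) = starRingEnd ℂ (c ω)) ∧
      ∀ z, (g z : ℂ) = ∑ ω ∈ Omega m, c ω * Complex.exp (Complex.I * (dotZ ω z : ℝ)) }

/-- The cube `[-π,π]^m`. -/
def box (m : ℕ) : Set (Fin m → ℝ) := Set.univ.pi fun _ => Set.Icc (-Real.pi) Real.pi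

/-- Inner product `⟨g₁,g₂⟩_H = ∫_{[-π,π]^m} g₁ g₂`. -/
def innerH (m : ℕ) (g₁ g₂ : (Fin m → ℝ) → ℝ) : ℝ := ∫ z in box m, g₁ z * g₂ z

/-- Partial derivative in direction `j`. -/
def partialD {m : ℕ} (j : Fin m) (g : (Fin m → ℝ) → ℝ) : (Fin m → ℝ) → ℝ :=
  fun x => fderiv ℝ g x (Pi.single j 1)

/-- Iterated partial derivative `D^α`. -/
def Dmulti {m : ℕ} (α : Fin m → ℕ) (g : (Fin m → ℝ) → ℝ) : (Fin m → ℝ) → ℝ :=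
  (List.finRange m).foldr (fun j h => (partialD j)^[α j] h) g

/-- The index set `{-1,1}^{|α|}`, with entries indexed as `𝔦_{j,k}`, `j : Fin m`, `k : Fin (α j)`. -/
def ShiftSet {m : ℕ} (α : Fin m → ℕ) : Finset (∀ j : Fin m, Fin (α j) → ℤ) :=
  Fintype.piFinset fun j => Fintype.piFinset fun _ => ({-1, 1} : Finset ℤ)

/-- The product `𝔦^{(1,…,1)}` of all entries of `𝔦`. -/
def signProd {m : ℕ} (α : Fin m → ℕ) (ε : ∀ j : Fin m, Fin (α j) → ℤ) : ℝ :=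
  ∏ j, ∏ k, ((ε j k : ℤ) : ℝ)

/-- The shifted point `p_{α,𝔦}`, with `j`-th coordinate `(π/2)·((Σ_k 𝔦_{j,k}) mod 4)`,
the representative mod 4 taken in `{0,1,2,3}`. -/
def pshift {m : ℕ} (α : Fin m → ℕ) (ε : ∀ j : Fin m, Fin (α j) → ℤ) : Fin m → ℝ :=
  fun j => (Real.pi / 2) * (((∑ k, ε j k) % 4 : ℤ) : ℝ)

/-- The point of the grid `(π/2)·{-1,0,1}^m` coded by `s : Fin m → Fin 3`. -/
def pt3 (m : ℕ) (s : Fin m → Fin 3) : Fin m → ℝ :=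
  fun j => (Real.pi / 2) * (((s j : ℕ) : ℝ) - 1)

/-- The point of the grid `(π/2)·{0,1,2,3}^m` coded by `s : Fin m → Fin 4`. -/
def pt4 (m : ℕ) (s : Fin m → Fin 4) : Fin m → ℝ :=
  fun j => (Real.pi / 2) * ((s j : ℕ) : ℝ)

/-- The grid `(π/2)·{-1,0,1}^m ⊆ ℝ^m`. -/
def grid3 (m : ℕ) : Set (Fin m → ℝ) := Set.range (pt3 m)

/-- The grid `(π/2)·{0,1,2,3}^m ⊆ ℝ^m`. -/
def grid4 (m : ℕ) : Set (Fin m → ℝ) := Set.range (pt4 m)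

/-- `I_d`: points of `ℝ^m` with at most `d` nonzero coordinates. -/
def Iset (m d : ℕ) : Set (Fin m → ℝ) := { z | Set.ncard { j : Fin m | z j ≠ 0 } ≤ d }

/-- Multiindices `α ∈ (ℤ_{≥0})^m` with `|α| ≤ L`, as a finset. -/
def multiIdx (m L : ℕ) : Finset (Fin m → ℕ) :=
  (Fintype.piFinset fun _ : Fin m => Finset.range (L + 1)).filter fun α => ∑ j, α j ≤ L

/-- The sup norm `‖g‖_∞ = sup_z |g(z)|`. -/
def supNorm (m : ℕ) (g : (Fin m → ℝ) → ℝ) : ℝ := ⨆ z : Fin m → ℝ, |g z|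

/-- The norm `‖g‖_H = √⟨g,g⟩_H`. -/
def normH (m : ℕ) (g : (Fin m → ℝ) → ℝ) : ℝ := Real.sqrt (innerH m g g)

end

/-!
The kernel factorises: `K(x, z) = (2π)^{-m} ∏ⱼ (1 + 2 cos (xⱼ - zⱼ))`, so the Gram
matrix of all `3^m` grid points is `(2π)^{-m}` times the `m`-fold Kronecker power of the `3 × 3`
matrix `(1 + 2 cos (π/2 · (a - b)))_{a,b}`. That matrix is positive definite, hence so is its
Kronecker power, and so is the principal submatrix indexed by distinct points `p₁, …, p_D`.
-/

open Matrix Kronecker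
open scoped ComplexOrder

namespace Matrix

variable {𝕜 n : Type*} [RCLike 𝕜]

def kroneckerPi {m : ℕ} (M : Fin m → Matrix n n 𝕜) : Matrix (Fin m → n) (Fin m → n) 𝕜 :=
  of fun a b => ∏ k, M k (a k) (b k)

theorem kroneckerPi_succ {m : ℕ} (M : Fin (m + 1) → Matrix n n 𝕜) :
    kroneckerPi M = (M 0 ⊗ₖ kroneckerPi fun k => M k.succ).submatrix
      (Fin.consEquiv fun _ => n).symm (Fin.consEquiv fun _ => n).symm := by
  ext a b
  simp [kroneckerPi, kroneckerMap_apply, Fin.consEquiv, Fin.prod_univ_succ, Fin.tail]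

theorem PosDef.kroneckerPi [Fintype n] {m : ℕ} {M : Fin m → Matrix n n 𝕜}
    (hM : ∀ k, (M k).PosDef) : (kroneckerPi M).PosDef := by
  induction m with
  | zero =>
    classical
    convert PosDef.one (n := Fin 0 → n) (R := 𝕜)
    ext a b
    rw [Subsingleton.elim a b]
    simp [Matrix.kroneckerPi]
  | succ m ih =>
    rw [kroneckerPi_succ]
    exact ((hM 0).kronecker (ih fun k => hM k.succ)).submatrix (Equiv.injective _)

end Matrix

/-- The values `1 + 2 cos (π/2 · (a - b))` for `a, b ∈ {-1, 0, 1}`. -/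
def gridKernel : Matrix (Fin 3) (Fin 3) ℝ := !![3, 1, -1; 1, 3, 1; -1, 1, 3]

theorem posDef_gridKernel : gridKernel.PosDef := by
  refine .of_dotProduct_mulVec_pos ?_ fun x hx => ?_
  · ext i j
    fin_cases i <;> fin_cases j <;> rfl
  · obtain ⟨i, hi⟩ : ∃ i, x i ≠ 0 := by
      by_contra! h
      exact hx (funext h)
    -- `xᵀ G x = ‖x‖² + (x₀ + x₁)² + (x₁ + x₂)² + (x₀ - x₂)²`
    simp only [dotProduct, Pi.star_apply, star_trivial, mulVec, gridKernel, of_apply, cons_val',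
      cons_val_fin_one, Fin.sum_univ_three, cons_val_zero, cons_val_one, cons_val, one_mul,
      neg_mul]
    have hsq : 0 < x 0 ^ 2 + x 1 ^ 2 + x 2 ^ 2 := by
      fin_cases i <;> simp at hi <;> positivity
    nlinarith [sq_nonneg (x 0 + x 1), sq_nonneg (x 1 + x 2), sq_nonneg (x 0 - x 2)]

theorem sum_exp_neg_one_zero_one (t : ℝ) :
    ∑ s ∈ ({-1, 0, 1} : Finset ℤ), Complex.exp (Complex.I * (s * t)) = 1 + 2 * Complex.cos t := by
  rw [Complex.cos]
  simp only [Finset.sum_insert (by decide : (-1 : ℤ) ∉ ({0, 1} : Finset ℤ)),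
    Finset.sum_insert (by decide : (0 : ℤ) ∉ ({1} : Finset ℤ)), Finset.sum_singleton]
  push_cast
  rw [zero_mul, mul_zero, Complex.exp_zero]
  ring_nf

theorem sum_Omega_exp (m : ℕ) (t : Fin m → ℝ) :
    ∑ ω ∈ Omega m, Complex.exp (Complex.I * (dotZ ω t : ℝ)) = ∏ j, (1 + 2 * Complex.cos (t j)) := by
  simp only [dotZ, Complex.ofReal_sum, Finset.mul_sum, Complex.exp_sum]
  simp only [← sum_exp_neg_one_zero_one, Finset.prod_univ_sum, Omega]
  push_cast
  rfl

theorem Kker_eq_prod (m : ℕ) (x z : Fin m → ℝ) :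
    Kker m x z = ((2 * π) ^ m)⁻¹ * ∏ j, (1 + 2 * Real.cos (x j - z j)) := by
  rw [Kker, sum_Omega_exp]
  norm_cast

theorem Kker_pt3 (m : ℕ) (a b : Fin m → Fin 3) :
    Kker m (pt3 m a) (pt3 m b) = ((2 * π) ^ m)⁻¹ * kroneckerPi (fun _ => gridKernel) a b := by
  rw [Kker_eq_prod, kroneckerPi, of_apply]
  congr 1
  refine Finset.prod_congr rfl fun j _ => ?_
  have hdiff : pt3 m a j - pt3 m b j = π / 2 * (((a j : ℕ) : ℝ) - (b j : ℕ)) := by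
    simp only [pt3]
    ring
  rw [hdiff]
  generalize a j = u, b j = v
  fin_cases u <;> fin_cases v <;> norm_num [gridKernel]

theorem gram_matrix_invertible_general (m : ℕ) (D : ℕ)
    (p : Fin D → (Fin m → ℝ)) (hp : ∀ i, p i ∈ grid3 m) (hinj : Function.Injective p) :
    IsUnit (Matrix.of fun i j => Kker m (p i) (p j)) ∧
      ∀ y : Fin D → ℝ, ∃! η : Fin D → ℝ,
        (Matrix.of fun i j => Kker m (p i) (p j)).mulVec η = y := by
  choose σ hσ using hp
  obtain rfl : p = pt3 m ∘ σ := funext fun i => (hσ i).symm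
  have hgram : (of fun i j => Kker m (pt3 m (σ i)) (pt3 m (σ j)))
      = ((2 * π) ^ m)⁻¹ • (kroneckerPi fun _ => gridKernel).submatrix σ σ := by
    ext i j
    simp [Kker_pt3]
  have hpos : (of fun i j => Kker m (pt3 m (σ i)) (pt3 m (σ j))).PosDef := by
    rw [hgram]
    exact ((PosDef.kroneckerPi fun _ => posDef_gridKernel).submatrix hinj.of_comp).smul
      (by positivity)
  have hunit := hpos.isUnit
  exact ⟨hunit, Function.Bijective.existsUnique
    ⟨mulVec_injective_iff_isUnit.2 hunit, mulVec_surjective_iff_isUnit.2 hunit⟩⟩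

/-- for pairwise distinct grid points `p₁,…,p_D ∈ (π/2)·{-1,0,1}^m`,
the Gram matrix `(K(p_i,p_j))` is invertible; in particular each linear system
`(K(p_i,p_j))·η = y` has a unique solution. -/
theorem gram_matrix_invertible (m : ℕ) (hm : 0 < m) (D : ℕ) (hD : 1 ≤ D)
    (p : Fin D → (Fin m → ℝ)) (hp : ∀ i, p i ∈ grid3 m) (hinj : Function.Injective p) :
    IsUnit (Matrix.of fun i j => Kker m (p i) (p j)) ∧
      ∀ y : Fin D → ℝ, ∃! η : Fin D → ℝ,
        (Matrix.of fun i j => Kker m (p i) (p j)).mulVec η = y :=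
  gram_matrix_invertible_general m D p hp hinj
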